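/- arXiv:1003.5313 — 4 statements merged into one kernel-verified Lean document; each statement's English description precedes it below -/
import Mathlib

section
/- The restriction of the action λ to the open subset V₁ = {(x,w,t,s) : s ≠ 0} is free and proper: λ((r,a), v) = v with v ∈ V₁ implies (r,a) = (0,0), and the map ℝ² × V₁ → V₁ × V₁ sending ((r,a), v) to (λ((r,a), v), v) is a proper map (the preimage of every compact set is compact). -/
/-!
The pair `(λ((r,a),v), v)` determines `(r,a)` continuously on `V₁`: `r` is the difference of the
`x`-coordinates and `a = log (s'/s)`, which makes sense because `s ≠ 0`. So the map
`((r,a),v) ↦ (λ((r,a),v), v)` has a continuous left inverse; between Hausdorff spaces this makes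
it a closed embedding, hence proper, and freeness is the special case `λ((r,a),v) = v`.
-/

noncomputable section

/-- The action `λ` of the additive group `ℝ²` on `ℝ × ℂ × ℝ × ℝ`:
`λ((r,a),(x,w,t,s)) = (x + r, w·e^{−ia}, t·e^{a}, s·e^{a})`. -/
def lamAct (ra : ℝ × ℝ) (v : ℝ × ℂ × ℝ × ℝ) : ℝ × ℂ × ℝ × ℝ :=
  (v.1 + ra.1, v.2.1 * Complex.exp (-(ra.2 : ℂ) * Complex.I),
    v.2.2.1 * Real.exp ra.2, v.2.2.2 * Real.exp ra.2)

/-- `V₁ = {(x,w,t,s) ∈ ℝ × ℂ × ℝ × ℝ : s ≠ 0}`, which is invariant under `λ`. -/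
def V1set : Set (ℝ × ℂ × ℝ × ℝ) := {v | v.2.2.2 ≠ 0}

/-- The action `λ` restricted to (the subtype) `V₁`. -/
def lamActV1 (ra : ℝ × ℝ) (v : V1set) : V1set :=
  ⟨lamAct ra v.val, mul_ne_zero v.prop (Real.exp_ne_zero ra.2)⟩

def lamActV1Displacement (p : V1set × V1set) : ℝ × ℝ :=
  (p.1.val.1 - p.2.val.1, Real.log (p.1.val.2.2.2 / p.2.val.2.2.2))

theorem continuous_lamActV1Displacement : Continuous lamActV1Displacement := by
  refine .prodMk (by fun_prop) (.log ?_ fun p => div_ne_zero p.1.prop p.2.prop)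
  exact .div (by fun_prop) (by fun_prop) fun p => p.2.prop

theorem lamActV1Displacement_lamActV1 (ra : ℝ × ℝ) (v : V1set) :
    lamActV1Displacement (lamActV1 ra v, v) = ra := by
  have hs : v.val.2.2.2 ≠ 0 := v.prop
  simp only [lamActV1Displacement, lamActV1, lamAct, add_sub_cancel_left,
    mul_div_cancel_left₀ _ hs, Real.log_exp]

theorem lamActV1Displacement_self (v : V1set) : lamActV1Displacement (v, v) = 0 := by
  simp [lamActV1Displacement, div_self v.prop]

theorem continuous_lamActV1 : Continuous fun q : (ℝ × ℝ) × V1set => lamActV1 q.1 q.2 :=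
  .subtype_mk (by unfold lamAct; fun_prop) _

theorem eq_zero_of_lamAct_eq_self (ra : ℝ × ℝ) (v : ℝ × ℂ × ℝ × ℝ) (hv : v ∈ V1set)
    (h : lamAct ra v = v) : ra = 0 := by
  have hfix : lamActV1 ra ⟨v, hv⟩ = ⟨v, hv⟩ := Subtype.ext h
  rw [← lamActV1Displacement_lamActV1 ra ⟨v, hv⟩, hfix, lamActV1Displacement_self]

theorem isClosedEmbedding_lamActV1_prod :
    Topology.IsClosedEmbedding fun q : (ℝ × ℝ) × V1set => (lamActV1 q.1 q.2, q.2) :=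
  Function.LeftInverse.isClosedEmbedding
    (f := fun p => (lamActV1Displacement p, p.2))
    (fun q => Prod.ext (lamActV1Displacement_lamActV1 q.1 q.2) rfl)
    (continuous_lamActV1Displacement.prodMk continuous_snd)
    (continuous_lamActV1.prodMk continuous_snd)

/-- The restriction of the action `λ` to `V₁` is free and proper:
`λ((r,a), v) = v` with `v ∈ V₁` implies `(r,a) = (0,0)`, and the map
`ℝ² × V₁ → V₁ × V₁, ((r,a), v) ↦ (λ((r,a), v), v)` is continuous and the preimage of
every compact set is compact. -/
theorem lamAct_free_proper_on_V1 :
    (∀ (ra : ℝ × ℝ) (v : ℝ × ℂ × ℝ × ℝ), v ∈ V1set → lamAct ra v = v → ra = 0) ∧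
    Continuous (fun q : (ℝ × ℝ) × V1set => (lamActV1 q.1 q.2, q.2)) ∧
    (∀ K : Set (V1set × V1set), IsCompact K →
      IsCompact ((fun q : (ℝ × ℝ) × V1set => (lamActV1 q.1 q.2, q.2)) ⁻¹' K)) :=
  ⟨eq_zero_of_lamAct_eq_self, isClosedEmbedding_lamActV1_prod.continuous,
    fun _ hK => isClosedEmbedding_lamActV1_prod.isCompact_preimage hK⟩
end
end

section
/- Define q₁ : V₁ → ℂ × ℝ × {−1, 1} by q₁(x, w, t, s) = (w·e^{i·log|s|}, t/|s|, sign(s)). Then q₁ is continuous and surjective, and its fibers are exactly the λ-orbits in V₁: two points v, v' ∈ V₁ satisfy q₁(v) = q₁(v') if and only if v' = λ((r,a), v) for some (r,a) ∈ ℝ². Consequently the leaf space V₁/ℝ² of the restricted foliation is in bijection with ℂ × ℝ × {−1,1} ≅ ℝ³ ⊔ ℝ³. -/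
noncomputable section

/-- `q₁ : V₁ → ℂ × ℝ × ℝ`, `q₁(x,w,t,s) = (w·e^{i·log|s|}, t/|s|, sign s)`
(with third component in `{−1,1}`). -/
def q1 (v : V1set) : ℂ × ℝ × ℝ :=
  ((v : ℝ × ℂ × ℝ × ℝ).2.1 *
      Complex.exp (Complex.I * (Real.log |(v : ℝ × ℂ × ℝ × ℝ).2.2.2| : ℝ)),
    (v : ℝ × ℂ × ℝ × ℝ).2.2.1 / |(v : ℝ × ℂ × ℝ × ℝ).2.2.2|,
    if 0 < (v : ℝ × ℂ × ℝ × ℝ).2.2.2 then 1 else -1)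

/-! The slice `{x = 0, |s| = 1}` meets every `λ`-orbit in `V₁` in exactly one point: the element
`(-x, -log |s|)` of `ℝ²` moves `(x, w, t, s)` to `(0, q₁(x, w, t, s))`, and it is the only element
moving it into the slice. Hence `q₁` is constant on orbits and separates them, its image is the
slice, and the bijection of the leaf space is the first isomorphism theorem for `q₁`. -/

lemma lamAct_zero (v : ℝ × ℂ × ℝ × ℝ) : lamAct 0 v = v := by
  simp [lamAct]

lemma lamAct_lamAct (ra rb : ℝ × ℝ) (v : ℝ × ℂ × ℝ × ℝ) :
    lamAct ra (lamAct rb v) = lamAct (ra + rb) v := by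
  simp only [lamAct, Prod.fst_add, Prod.snd_add, Real.exp_add, Prod.mk.injEq]
  refine ⟨by ring, ?_, by ring, by ring⟩
  rw [mul_assoc, ← Complex.exp_add]
  push_cast
  ring_nf

lemma lamAct_neg_lamAct (ra : ℝ × ℝ) (v : ℝ × ℂ × ℝ × ℝ) : lamAct (-ra) (lamAct ra v) = v := by
  rw [lamAct_lamAct, neg_add_cancel, lamAct_zero]

def normalizingShift (v : ℝ × ℂ × ℝ × ℝ) : ℝ × ℝ := (-v.1, -Real.log |v.2.2.2|)

lemma lamAct_normalizingShift (v : V1set) :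
    lamAct (normalizingShift v) v = ((0 : ℝ), q1 v) := by
  obtain ⟨⟨x, w, t, s⟩, hs : s ≠ 0⟩ := v
  have hexp : Real.exp (-Real.log |s|) = |s|⁻¹ := by
    rw [Real.exp_neg, Real.exp_log (abs_pos.mpr hs)]
  simp only [lamAct, normalizingShift, q1, hexp, Prod.mk.injEq]
  refine ⟨add_neg_cancel x, by push_cast; ring_nf, div_eq_mul_inv t |s| |>.symm, ?_⟩
  rcases hs.lt_or_gt with h | h
  · simp [h.not_gt, abs_of_neg h, h.ne]
  · simp [h, abs_of_pos h, h.ne']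

lemma normalizingShift_unique (v : V1set) (ra : ℝ × ℝ) (hx : (lamAct ra v).1 = 0)
    (hs : |(lamAct ra v).2.2.2| = 1) : ra = normalizingShift v := by
  obtain ⟨⟨x, w, t, s⟩, hs0 : s ≠ 0⟩ := v
  simp only [lamAct, abs_mul, Real.abs_exp] at hx hs
  have := congrArg Real.log hs
  rw [Real.log_mul (abs_ne_zero.mpr hs0) (Real.exp_ne_zero _), Real.log_exp, Real.log_one] at this
  ext <;> simp only [normalizingShift] <;> linarith

lemma abs_q1_snd_snd (v : V1set) : |(q1 v).2.2| = 1 := by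
  simp only [q1]
  split <;> simp

lemma q1_eq_of_lamAct_eq {v v' : V1set} {ra : ℝ × ℝ}
    (h : lamAct ra (v : ℝ × ℂ × ℝ × ℝ) = v') : q1 v = q1 v' := by
  have hmove : lamAct (normalizingShift v' + ra) v = ((0 : ℝ), q1 v') := by
    rw [← lamAct_lamAct, h, lamAct_normalizingShift]
  have hnorm : normalizingShift v' + ra = normalizingShift v :=
    normalizingShift_unique v _ (by rw [hmove]) (by rw [hmove]; exact abs_q1_snd_snd v')
  have := lamAct_normalizingShift v
  rw [← hnorm, hmove, Prod.mk.injEq] at this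
  exact this.2.symm

lemma q1_eq_iff (v v' : V1set) : q1 v = q1 v' ↔
    ∃ ra : ℝ × ℝ, lamAct ra (v : ℝ × ℂ × ℝ × ℝ) = (v' : ℝ × ℂ × ℝ × ℝ) := by
  refine ⟨fun h => ⟨-normalizingShift v' + normalizingShift v, ?_⟩,
    fun ⟨_, h⟩ => q1_eq_of_lamAct_eq h⟩
  rw [← lamAct_lamAct, lamAct_normalizingShift, h, ← lamAct_normalizingShift, lamAct_neg_lamAct]

lemma q1_eq_snd_of_mem_slice (v : V1set) (hx : (v : ℝ × ℂ × ℝ × ℝ).1 = 0)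
    (hs : |(v : ℝ × ℂ × ℝ × ℝ).2.2.2| = 1) : q1 v = (v : ℝ × ℂ × ℝ × ℝ).2 := by
  have := lamAct_normalizingShift v
  rw [← normalizingShift_unique v 0 (by rwa [lamAct_zero]) (by rwa [lamAct_zero]),
    lamAct_zero] at this
  exact congrArg Prod.snd this.symm

lemma range_q1 : Set.range q1 = {p : ℂ × ℝ × ℝ | p.2.2 = 1 ∨ p.2.2 = -1} := by
  ext p
  rw [Set.mem_ofPred_eq, ← abs_eq (zero_le_one' ℝ)]
  refine ⟨fun ⟨v, hv⟩ => hv ▸ abs_q1_snd_snd v, fun hp => ?_⟩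
  have hv : ((0 : ℝ), p) ∈ V1set := abs_pos.mp (hp ▸ zero_lt_one)
  exact ⟨⟨_, hv⟩, q1_eq_snd_of_mem_slice ⟨_, hv⟩ rfl hp⟩

lemma continuous_q1 : Continuous q1 := by
  have hq1 : q1 = fun v : V1set => (lamAct (normalizingShift v) v).2 :=
    funext fun v => by rw [lamAct_normalizingShift]
  have hlog : Continuous fun v : V1set => Real.log |(v : ℝ × ℂ × ℝ × ℝ).2.2.2| :=
    (continuous_subtype_val.snd.snd.snd.abs).log fun v => abs_ne_zero.mpr v.2
  rw [hq1]
  simp only [lamAct, normalizingShift]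
  fun_prop

/-- `q₁` is continuous, surjective onto `ℂ × ℝ × {−1,1}`, and its fibers are exactly the
`λ`-orbits in `V₁`; consequently the leaf space `V₁/ℝ²` is in bijection with
`ℂ × ℝ × {−1,1} ≅ ℝ³ ⊔ ℝ³`. -/
theorem q1_classifies_orbits :
    Continuous q1 ∧
    Set.range q1 = {p : ℂ × ℝ × ℝ | p.2.2 = 1 ∨ p.2.2 = -1} ∧
    (∀ v v' : V1set, q1 v = q1 v' ↔
      ∃ ra : ℝ × ℝ, lamAct ra (v : ℝ × ℂ × ℝ × ℝ) = (v' : ℝ × ℂ × ℝ × ℝ)) ∧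
    ∃ e : Quot (fun v v' : V1set =>
          ∃ ra : ℝ × ℝ, lamAct ra (v : ℝ × ℂ × ℝ × ℝ) = (v' : ℝ × ℂ × ℝ × ℝ)) ≃
        {p : ℂ × ℝ × ℝ // p.2.2 = 1 ∨ p.2.2 = -1},
      ∀ v : V1set, (e (Quot.mk _ v) : ℂ × ℝ × ℝ) = q1 v :=
  ⟨continuous_q1, range_q1, q1_eq_iff,
    (Quot.congrRight fun v v' => (q1_eq_iff v v').symm).trans
      ((Setoid.quotientKerEquivRange q1).trans (Equiv.setCongr range_q1)),
    fun _ => rfl⟩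
end
end

section
/- Define q₂ : V₂ → ℂ × {−1, 1} by q₂(x, w, t, 0) = (w·e^{i·log|t|}, sign(t)). Then q₂ is continuous and surjective, and its fibers are exactly the λ-orbits in V₂: two points v, v' ∈ V₂ satisfy q₂(v) = q₂(v') if and only if v' = λ((r,a), v) for some (r,a) ∈ ℝ². Consequently the leaf space V₂/ℝ² is in bijection with ℂ × {−1,1} ≅ ℝ² ⊔ ℝ². -/
/-!
The action translates `x`, rescales `t` by `e^a` (keeping its sign and shifting `log |t|` by `a`)
and rotates `w` by `-a`, so `w · e^{i log |t|}` and `sign t` are invariant. Conversely, points with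
equal invariants are joined by `r = x' - x`, `a = log |t'| - log |t|`. The leaf space is then the
quotient of `V₂` by the kernel of `q₂`, which the first isomorphism theorem for sets identifies with
the range of `q₂`.
-/

noncomputable section

/-- `V₂ = {(x,w,t,s) : s = 0 and t ≠ 0}`, which is invariant under `λ`. -/
def V2set : Set (ℝ × ℂ × ℝ × ℝ) := {v | v.2.2.2 = 0 ∧ v.2.2.1 ≠ 0}

/-- `q₂ : V₂ → ℂ × ℝ`, `q₂(x,w,t,0) = (w·e^{i·log|t|}, sign t)`
(with second component in `{−1,1}`). -/
def q2 (v : V2set) : ℂ × ℝ :=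
  ((v : ℝ × ℂ × ℝ × ℝ).2.1 *
      Complex.exp (Complex.I * (Real.log |(v : ℝ × ℂ × ℝ × ℝ).2.2.1| : ℝ)),
    if 0 < (v : ℝ × ℂ × ℝ × ℝ).2.2.1 then 1 else -1)

lemma ite_pos_one_neg_one_eq_div_abs {t : ℝ} (ht : t ≠ 0) :
    (if 0 < t then 1 else -1 : ℝ) = t / |t| := by
  rcases ht.lt_or_gt with h | h
  · simp [not_lt.mpr h.le, abs_of_neg h, div_neg, div_self h.ne]
  · simp [h, abs_of_pos h, div_self h.ne']

lemma ite_pos_one_neg_one_inj {t t' : ℝ} :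
    (if 0 < t then 1 else -1 : ℝ) = (if 0 < t' then 1 else -1) ↔ (0 < t ↔ 0 < t') := by
  split_ifs <;> norm_num <;> tauto

lemma mul_exp_log_abs_sub_log_abs {t t' : ℝ} (ht : t ≠ 0) (ht' : t' ≠ 0)
    (hsign : 0 < t ↔ 0 < t') : t * Real.exp (Real.log |t'| - Real.log |t|) = t' := by
  have hpos : 0 < t' / t := by
    rcases ht.lt_or_gt with h | h
    · exact div_pos_of_neg_of_neg (ht'.lt_or_gt.resolve_right (mt hsign.mpr h.not_gt)) h
    · exact div_pos (hsign.mp h) h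
  rw [Real.exp_sub, Real.exp_log (abs_pos.mpr ht'), Real.exp_log (abs_pos.mpr ht), ← abs_div,
    abs_of_pos hpos]
  field_simp

lemma continuous_q2 : Continuous q2 := by
  have ht : Continuous fun v : V2set => (v : ℝ × ℂ × ℝ × ℝ).2.2.1 := by fun_prop
  have ht0 : ∀ v : V2set, (v : ℝ × ℂ × ℝ × ℝ).2.2.1 ≠ 0 := fun v => v.2.2
  have hlog : Continuous fun v : V2set => Real.log |(v : ℝ × ℂ × ℝ × ℝ).2.2.1| :=
    (continuous_abs.comp ht).log fun v => abs_ne_zero.mpr (ht0 v)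
  refine (continuous_subtype_val.snd.fst.mul ?_).prodMk ?_
  · fun_prop
  · simp_rw [ite_pos_one_neg_one_eq_div_abs (ht0 _)]
    exact ht.div (continuous_abs.comp ht) fun v => abs_ne_zero.mpr (ht0 v)

lemma lamAct_mem_V2set (ra : ℝ × ℝ) {v : ℝ × ℂ × ℝ × ℝ} (hv : v ∈ V2set) :
    lamAct ra v ∈ V2set :=
  ⟨by simp [lamAct, hv.1], mul_ne_zero hv.2 (Real.exp_pos _).ne'⟩

lemma q2_lamAct (ra : ℝ × ℝ) (v : V2set) :
    q2 ⟨lamAct ra v, lamAct_mem_V2set ra v.2⟩ = q2 v := by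
  obtain ⟨⟨x, w, t, s⟩, -, ht⟩ := v
  have hea := Real.exp_pos ra.2
  simp only [q2, lamAct, abs_mul, abs_of_pos hea, Real.log_mul (abs_ne_zero.mpr ht) hea.ne',
    Real.log_exp, mul_pos_iff_of_pos_right hea, Prod.mk.injEq, and_true]
  rw [mul_assoc, ← Complex.exp_add]
  congr 2
  push_cast
  ring

lemma exists_lamAct_eq_of_q2_eq {v v' : V2set} (h : q2 v = q2 v') :
    ∃ ra : ℝ × ℝ, lamAct ra v = v' := by
  obtain ⟨⟨x, w, t, s⟩, hs, ht⟩ := v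
  obtain ⟨⟨x', w', t', s'⟩, hs', ht'⟩ := v'
  obtain ⟨hw, hsign⟩ := Prod.mk.inj h
  refine ⟨(x' - x, Real.log |t'| - Real.log |t|), ?_⟩
  simp only [lamAct, Prod.mk.injEq]
  refine ⟨by ring, ?_, mul_exp_log_abs_sub_log_abs ht ht' (ite_pos_one_neg_one_inj.mp hsign), ?_⟩
  · apply mul_right_cancel₀ (Complex.exp_ne_zero (Complex.I * (Real.log |t'| : ℝ)))
    rw [mul_assoc, ← Complex.exp_add, ← hw]
    congr 2
    push_cast
    ring
  · rw [show s = 0 from hs, show s' = 0 from hs', zero_mul]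

lemma q2_eq_iff {v v' : V2set} : q2 v = q2 v' ↔ ∃ ra : ℝ × ℝ, lamAct ra v = v' := by
  refine ⟨exists_lamAct_eq_of_q2_eq, ?_⟩
  rintro ⟨ra, h⟩
  obtain rfl : ⟨lamAct ra v, lamAct_mem_V2set ra v.2⟩ = v' := Subtype.ext h
  exact (q2_lamAct ra v).symm

lemma range_q2 : Set.range q2 = {p : ℂ × ℝ | p.2 = 1 ∨ p.2 = -1} := by
  refine Set.Subset.antisymm ?_ fun ⟨z, ε⟩ hε => ?_
  · rintro _ ⟨v, rfl⟩
    by_cases h : 0 < (v : ℝ × ℂ × ℝ × ℝ).2.2.1 <;> simp [q2, h]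
  · rcases (hε : ε = 1 ∨ ε = -1) with rfl | rfl
    · exact ⟨⟨(0, z, 1, 0), by simp [V2set]⟩, by simp [q2]⟩
    · exact ⟨⟨(0, z, -1, 0), by simp [V2set]⟩, by norm_num [q2]⟩

/-- `q₂` is continuous, surjective onto `ℂ × {−1,1}`, and its fibers are exactly the
`λ`-orbits in `V₂`; consequently the leaf space `V₂/ℝ²` is in bijection with
`ℂ × {−1,1} ≅ ℝ² ⊔ ℝ²`. -/
theorem q2_classifies_orbits :
    Continuous q2 ∧
    Set.range q2 = {p : ℂ × ℝ | p.2 = 1 ∨ p.2 = -1} ∧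
    (∀ v v' : V2set, q2 v = q2 v' ↔
      ∃ ra : ℝ × ℝ, lamAct ra (v : ℝ × ℂ × ℝ × ℝ) = (v' : ℝ × ℂ × ℝ × ℝ)) ∧
    ∃ e : Quot (fun v v' : V2set =>
          ∃ ra : ℝ × ℝ, lamAct ra (v : ℝ × ℂ × ℝ × ℝ) = (v' : ℝ × ℂ × ℝ × ℝ)) ≃
        {p : ℂ × ℝ // p.2 = 1 ∨ p.2 = -1},
      ∀ v : V2set, (e (Quot.mk _ v) : ℂ × ℝ) = q2 v := by
  refine ⟨continuous_q2, range_q2, fun v v' => q2_eq_iff, ?_⟩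
  let orbitsEquivKer := Quot.congr (rb := (Setoid.ker q2).r) (Equiv.refl V2set)
    fun _ _ => q2_eq_iff.symm
  exact ⟨orbitsEquivKer.trans ((Setoid.quotientKerEquivRange q2).trans
    (Equiv.setCongr range_q2)), fun v => rfl⟩
end
end

section
/- Let q ∈ M₂(ℂ) be a self-adjoint idempotent with trace 1, and define f : ℝ → M₂(ℂ) by f(z) = exp(2πi·(z/√(1+z²))·q). Then f(z) is unitary (in particular invertible) for every z ∈ ℝ, f is differentiable, and the winding numbers over the two half-lines both equal 1: (1/(2πi))·∫₀^{∞} trace(f′(z)·f(z)⁻¹) dz = 1 and (1/(2πi))·∫_{−∞}^{0} trace(f′(z)·f(z)⁻¹) dz = 1. -/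
noncomputable section

open Matrix MeasureTheory
open scoped Real

attribute [local instance] Matrix.linftyOpNormedRing Matrix.linftyOpNormedAlgebra

/-- `f(z) = exp(2πi·(z/√(1+z²))·q)`, defined via the matrix exponential. -/
def fUnit (q : Matrix (Fin 2) (Fin 2) ℂ) (z : ℝ) : Matrix (Fin 2) (Fin 2) ℂ :=
  NormedSpace.exp
    ((2 * (Real.pi : ℂ) * Complex.I * ((z : ℂ) / ((Real.sqrt (1 + z ^ 2) : ℝ) : ℂ))) • q)

/-!
Since `z / √(1 + z²) = sin (arctan z)`, we have `f z = exp (2πi θ(z) q)` with `θ = sin ∘ arctan`,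
which increases from `-1` through `θ 0 = 0` to `1`. As `q` is self-adjoint and `2πi θ(z)` is
imaginary, the exponent is skew-adjoint, so `f z` is unitary. Because `q` commutes with
`exp (c q)`, the logarithmic derivative is `f' f⁻¹ = 2πi θ' q`, whose trace is `2πi θ'`; the
integral of `θ'` over either half-line is `1` by the fundamental theorem of calculus.
-/

open Filter Set Topology Real NormedSpace

lemma hasDerivAt_sin_arctan (z : ℝ) :
    HasDerivAt (fun x => sin (arctan x)) (cos (arctan z) * (1 + z ^ 2)⁻¹) z :=
  (hasDerivAt_sin _).comp z (hasDerivAt_arctan' z)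

lemma integrable_cos_arctan_mul_inv_one_add_sq :
    Integrable fun z : ℝ => cos (arctan z) * (1 + z ^ 2)⁻¹ :=
  integrable_inv_one_add_sq.bdd_mul (by fun_prop) (ae_of_all _ fun z => by
    simpa using abs_cos_le_one (arctan z))

lemma tendsto_sin_arctan_atTop : Tendsto (fun x => sin (arctan x)) atTop (𝓝 1) := by
  simpa [Function.comp_def] using
    (continuous_sin.tendsto _).comp (tendsto_nhds_of_tendsto_nhdsWithin tendsto_arctan_atTop)

lemma tendsto_sin_arctan_atBot : Tendsto (fun x => sin (arctan x)) atBot (𝓝 (-1)) := by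
  simpa [Function.comp_def] using
    (continuous_sin.tendsto _).comp (tendsto_nhds_of_tendsto_nhdsWithin tendsto_arctan_atBot)

lemma integral_Ioi_cos_arctan_mul_inv_one_add_sq :
    ∫ z in Ioi (0 : ℝ), cos (arctan z) * (1 + z ^ 2)⁻¹ = 1 := by
  rw [integral_Ioi_of_hasDerivAt_of_tendsto' (fun z _ => hasDerivAt_sin_arctan z)
    integrable_cos_arctan_mul_inv_one_add_sq.integrableOn tendsto_sin_arctan_atTop]
  simp

lemma integral_Iio_cos_arctan_mul_inv_one_add_sq :
    ∫ z in Iio (0 : ℝ), cos (arctan z) * (1 + z ^ 2)⁻¹ = 1 := by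
  rw [← integral_Iic_eq_integral_Iio, integral_Iic_of_hasDerivAt_of_tendsto'
    (fun z _ => hasDerivAt_sin_arctan z)
    integrable_cos_arctan_mul_inv_one_add_sq.integrableOn tendsto_sin_arctan_atBot]
  simp

theorem HasDerivAt.exp_smul_const {𝔸 : Type*} [NormedRing 𝔸] [NormedAlgebra ℂ 𝔸]
    [CompleteSpace 𝔸] {φ : ℝ → ℂ} {φ' : ℂ} {t : ℝ} (hφ : HasDerivAt φ φ' t) (a : 𝔸) :
    HasDerivAt (fun s => NormedSpace.exp (φ s • a)) (φ' • (a * NormedSpace.exp (φ t • a))) t :=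
  (hasDerivAt_exp_smul_const' a (φ t)).scomp t hφ

section Matrix

variable {n : Type*} [Fintype n] [DecidableEq n]

lemma exp_mul_inv_exp (a : Matrix n n ℂ) : exp a * (exp a)⁻¹ = 1 :=
  mul_nonsing_inv _ ((isUnit_iff_isUnit_det _).mp (Matrix.isUnit_exp a))

lemma exp_smul_mem_unitaryGroup {q : Matrix n n ℂ} (hq : qᴴ = q) {c : ℂ} (hc : star c = -c) :
    exp (c • q) ∈ unitaryGroup n ℂ := by
  rw [mem_unitaryGroup_iff, star_eq_conjTranspose, ← exp_conjTranspose, conjTranspose_smul, hq, hc,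
    neg_smul, Matrix.exp_neg, exp_mul_inv_exp]

lemma trace_smul_mul_exp_mul_inv_exp (q : Matrix n n ℂ) (c w : ℂ) :
    trace (c • (q * exp (w • q)) * (exp (w • q))⁻¹) = c * trace q := by
  rw [smul_mul_assoc, mul_assoc, exp_mul_inv_exp, mul_one, trace_smul, smul_eq_mul]

end Matrix

lemma fUnit_eq_exp_sin_arctan (q : Matrix (Fin 2) (Fin 2) ℂ) :
    fUnit q = fun z => exp ((2 * π * Complex.I * (sin (arctan z) : ℂ)) • q) := by
  ext1 z
  simp [fUnit, sin_arctan]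

lemma star_two_pi_I_mul_ofReal (x : ℝ) :
    star (2 * π * Complex.I * (x : ℂ)) = -(2 * π * Complex.I * (x : ℂ)) := by
  simp [Complex.conj_ofReal]

theorem fUnit_unitary_winding_numbers_general
    (q : Matrix (Fin 2) (Fin 2) ℂ) (hq_sa : qᴴ = q)
    (hq_tr : Matrix.trace q = 1) :
    (∀ z : ℝ, fUnit q z ∈ Matrix.unitaryGroup (Fin 2) ℂ ∧ IsUnit (fUnit q z)) ∧
    ∃ f' : ℝ → Matrix (Fin 2) (Fin 2) ℂ,
      (∀ z : ℝ, HasDerivAt (fUnit q) (f' z) z) ∧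
      (1 / (2 * (Real.pi : ℂ) * Complex.I)) *
          ∫ z in Set.Ioi (0 : ℝ), Matrix.trace (f' z * (fUnit q z)⁻¹) = 1 ∧
      (1 / (2 * (Real.pi : ℂ) * Complex.I)) *
          ∫ z in Set.Iio (0 : ℝ), Matrix.trace (f' z * (fUnit q z)⁻¹) = 1 := by
  let θ' (z : ℝ) : ℝ := cos (arctan z) * (1 + z ^ 2)⁻¹
  have winding (s : Set ℝ) (hs : ∫ z in s, θ' z = 1) :
      (1 / (2 * (π : ℂ) * Complex.I)) *
        ∫ z in s, trace ((2 * π * Complex.I * (θ' z : ℂ)) • (q * fUnit q z) * (fUnit q z)⁻¹) = 1 := by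
    simp only [fUnit_eq_exp_sin_arctan, trace_smul_mul_exp_mul_inv_exp, hq_tr, mul_one,
      integral_const_mul]
    rw [integral_complex_ofReal, hs, Complex.ofReal_one, mul_one]
    field_simp
  refine ⟨fun z => ?_, _, fun z => ?_, winding _ integral_Ioi_cos_arctan_mul_inv_one_add_sq,
    winding _ integral_Iio_cos_arctan_mul_inv_one_add_sq⟩
  · rw [fUnit_eq_exp_sin_arctan]
    exact ⟨exp_smul_mem_unitaryGroup hq_sa (star_two_pi_I_mul_ofReal _), Matrix.isUnit_exp _⟩
  · rw [fUnit_eq_exp_sin_arctan]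
    exact ((hasDerivAt_sin_arctan z).ofReal_comp.const_mul _).exp_smul_const q

/-- For a self-adjoint idempotent `q ∈ M₂(ℂ)` with trace `1` and
`f(z) = exp(2πi·(z/√(1+z²))·q)`: every `f(z)` is unitary (in particular invertible),
`f` is differentiable, and the winding numbers over the two half-lines both equal `1`:
`(1/2πi)·∫₀^∞ tr(f′(z)f(z)⁻¹) dz = 1` and `(1/2πi)·∫_{−∞}^0 tr(f′(z)f(z)⁻¹) dz = 1`. -/
theorem fUnit_unitary_winding_numbers
    (q : Matrix (Fin 2) (Fin 2) ℂ) (hq_sa : qᴴ = q) (hq_idem : q * q = q)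
    (hq_tr : Matrix.trace q = 1) :
    (∀ z : ℝ, fUnit q z ∈ Matrix.unitaryGroup (Fin 2) ℂ ∧ IsUnit (fUnit q z)) ∧
    ∃ f' : ℝ → Matrix (Fin 2) (Fin 2) ℂ,
      (∀ z : ℝ, HasDerivAt (fUnit q) (f' z) z) ∧
      (1 / (2 * (Real.pi : ℂ) * Complex.I)) *
          ∫ z in Set.Ioi (0 : ℝ), Matrix.trace (f' z * (fUnit q z)⁻¹) = 1 ∧
      (1 / (2 * (Real.pi : ℂ) * Complex.I)) *
          ∫ z in Set.Iio (0 : ℝ), Matrix.trace (f' z * (fUnit q z)⁻¹) = 1 :=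
  fUnit_unitary_winding_numbers_general q hq_sa hq_tr
end
end
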